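/- arXiv:math/0411397 — 3 statements merged into one kernel-verified Lean document; each statement's English description precedes it below -/
import Mathlib

section
/- Let M ≥ 2 and let K_1, ..., K_M be distinct positive integers. Set K̄ = (1/M) Σ_{i=1}^{M} K_i and Var(K) = (1/M) Σ_{i=1}^{M} K_i^2 - K̄^2 (which is strictly positive since the K_i are distinct). Then over all real vectors (a_1, ..., a_M) satisfying the constraints Σ_{i=1}^{M} a_i = 1 and Σ_{i=1}^{M} a_i/K_i = 0, the quantity γ^2 = 4 Σ_{i=1}^{M} (a_i/K_i)^2 attains its minimum exactly at a_i = K_i (K_i - K̄)/(M · Var(K)), i = 1, ..., M, and the minimal value is γ*^2 = 4/(M · Var(K)). -/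
/-- Constrained minimization of `γ² = 4 ∑ (a_i/K_i)²` subject to `∑ a_i = 1` and
`∑ a_i/K_i = 0`: the minimum is attained exactly at
`a_i = K_i (K_i - K̄)/(M Var(K))`, with minimal value `4/(M Var(K))`. -/
theorem stmt2 (M : ℕ) (hM : 2 ≤ M) (K : Fin M → ℕ)
    (hKpos : ∀ i, 1 ≤ K i) (hKinj : Function.Injective K)
    (Kbar VarK : ℝ)
    (hKbar : Kbar = (1 / (M : ℝ)) * ∑ i, (K i : ℝ))
    (hVarK : VarK = (1 / (M : ℝ)) * ∑ i, (K i : ℝ) ^ 2 - Kbar ^ 2)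
    (astar : Fin M → ℝ)
    (hastar : ∀ i, astar i = (K i : ℝ) * ((K i : ℝ) - Kbar) / ((M : ℝ) * VarK)) :
    0 < VarK ∧
    (∑ i, astar i = 1) ∧
    (∑ i, astar i / (K i : ℝ) = 0) ∧
    (4 * ∑ i, (astar i / (K i : ℝ)) ^ 2 = 4 / ((M : ℝ) * VarK)) ∧
    (∀ a : Fin M → ℝ, ∑ i, a i = 1 → ∑ i, a i / (K i : ℝ) = 0 →
      4 / ((M : ℝ) * VarK) ≤ 4 * ∑ i, (a i / (K i : ℝ)) ^ 2) ∧
    (∀ a : Fin M → ℝ, ∑ i, a i = 1 → ∑ i, a i / (K i : ℝ) = 0 →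
      4 * ∑ i, (a i / (K i : ℝ)) ^ 2 = 4 / ((M : ℝ) * VarK) → a = astar) := by
  have hMpos : (0:ℝ) < M := by
    have : 0 < M := lt_of_lt_of_le (by norm_num) hM
    exact_mod_cast this
  have hMne : (M:ℝ) ≠ 0 := ne_of_gt hMpos
  have hK0 : ∀ i, (K i : ℝ) ≠ 0 := fun i => by
    have h1 := hKpos i
    have : K i ≠ 0 := Nat.one_le_iff_ne_zero.mp h1
    exact_mod_cast this
  have hsumK : ∑ i, (K i:ℝ) = M * Kbar := by
    rw [hKbar]; field_simp
  set D := (M:ℝ) * VarK with hD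
  have hDeq : D = ∑ i, ((K i:ℝ) - Kbar)^2 := by
    have expand : ∀ i ∈ Finset.univ, ((K i:ℝ) - Kbar)^2
        = (K i:ℝ)^2 - 2*Kbar*(K i:ℝ) + Kbar^2 := fun i _ => by ring
    rw [Finset.sum_congr rfl expand, Finset.sum_add_distrib, Finset.sum_sub_distrib,
      ← Finset.mul_sum, hsumK, Finset.sum_const, Finset.card_univ, Fintype.card_fin,
      nsmul_eq_mul, hD, hVarK]
    field_simp; ring
  -- positivity of D
  have hi01 : (⟨0, lt_of_lt_of_le (by norm_num) hM⟩ : Fin M) ≠ ⟨1, lt_of_lt_of_le (by norm_num) hM⟩ := by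
    simp [Fin.ext_iff]
  set i0 : Fin M := ⟨0, lt_of_lt_of_le (by norm_num) hM⟩
  set i1 : Fin M := ⟨1, lt_of_lt_of_le (by norm_num) hM⟩
  have hKne : (K i0 : ℝ) ≠ (K i1 : ℝ) := by
    have : K i0 ≠ K i1 := fun h => hi01 (hKinj h)
    exact_mod_cast this
  have hDpos : 0 < D := by
    rw [hDeq]
    rcases ne_or_eq ((K i0 : ℝ)) Kbar with h | h
    · exact Finset.sum_pos' (fun i _ => sq_nonneg _)
        ⟨i0, Finset.mem_univ _,
          lt_of_le_of_ne (sq_nonneg _) (Ne.symm (pow_ne_zero 2 (sub_ne_zero.mpr h)))⟩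
    · have h1 : (K i1 : ℝ) ≠ Kbar := fun h1 => hKne (by rw [h, h1])
      exact Finset.sum_pos' (fun i _ => sq_nonneg _)
        ⟨i1, Finset.mem_univ _,
          lt_of_le_of_ne (sq_nonneg _) (Ne.symm (pow_ne_zero 2 (sub_ne_zero.mpr h1)))⟩
  have hDne : D ≠ 0 := ne_of_gt hDpos
  have hVpos : 0 < VarK := by
    have h := hDpos
    rw [hD] at h
    nlinarith
  have hVne : VarK ≠ 0 := ne_of_gt hVpos
  -- sum K (K - Kbar) = D
  have hKKbar : ∑ i, (K i:ℝ) * ((K i:ℝ) - Kbar) = D := by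
    have expand : ∀ i ∈ Finset.univ, (K i:ℝ) * ((K i:ℝ) - Kbar)
        = (K i:ℝ)^2 - Kbar*(K i:ℝ) := fun i _ => by ring
    rw [Finset.sum_congr rfl expand, Finset.sum_sub_distrib, ← Finset.mul_sum, hsumK,
      hD, hVarK]
    field_simp
  have hsumKbar : ∑ i, ((K i:ℝ) - Kbar) = 0 := by
    rw [Finset.sum_sub_distrib, hsumK, Finset.sum_const, Finset.card_univ, Fintype.card_fin,
      nsmul_eq_mul]
    ring
  have hastar_div : ∀ i, astar i / (K i:ℝ) = ((K i:ℝ) - Kbar) / D := fun i => by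
    rw [hastar i]
    field_simp [hK0 i, hMne, hVne]
  have hsum1 : ∑ i, astar i = 1 := by
    have h : ∑ i, astar i = (∑ i, (K i:ℝ) * ((K i:ℝ) - Kbar)) / D := by
      rw [Finset.sum_div]
      exact Finset.sum_congr rfl fun i _ => hastar i
    rw [h, hKKbar, div_self hDne]
  have hsum2 : ∑ i, astar i / (K i:ℝ) = 0 := by
    have h : ∑ i, astar i / (K i:ℝ) = (∑ i, ((K i:ℝ) - Kbar)) / D := by
      rw [Finset.sum_div]
      exact Finset.sum_congr rfl fun i _ => hastar_div i
    rw [h, hsumKbar, zero_div]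
  have hsum3 : ∑ i, (astar i / (K i:ℝ))^2 = 1 / D := by
    have h : ∑ i, (astar i / (K i:ℝ))^2 = (∑ i, ((K i:ℝ) - Kbar)^2) / D^2 := by
      rw [Finset.sum_div]
      exact Finset.sum_congr rfl fun i _ => by rw [hastar_div i, div_pow]
    rw [h, ← hDeq]
    field_simp [hMne, hVne]
  -- key identity for arbitrary feasible a
  have key : ∀ a : Fin M → ℝ, ∑ i, a i = 1 → ∑ i, a i / (K i : ℝ) = 0 →
      ∑ i, (a i / (K i:ℝ))^2
        = (∑ i, (a i / (K i:ℝ) - ((K i:ℝ) - Kbar)/D)^2) + 1 / D := by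
    intro a ha1 ha2
    have hcross : ∑ i, (a i / (K i:ℝ)) * ((K i:ℝ) - Kbar) = 1 := by
      have expand : ∀ i ∈ Finset.univ, (a i / (K i:ℝ)) * ((K i:ℝ) - Kbar)
          = a i - Kbar * (a i / (K i:ℝ)) := fun i _ => by
        field_simp [hK0 i]
      rw [Finset.sum_congr rfl expand, Finset.sum_sub_distrib, ← Finset.mul_sum,
        ha1, ha2, mul_zero, sub_zero]
    have expand : ∀ i ∈ Finset.univ, (a i / (K i:ℝ) - ((K i:ℝ) - Kbar)/D)^2
        = (a i / (K i:ℝ))^2 - (2/D) * ((a i / (K i:ℝ)) * ((K i:ℝ) - Kbar))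
          + (1/D^2) * ((K i:ℝ) - Kbar)^2 := fun i _ => by
      field_simp [hK0 i, hMne, hVne]
      ring
    rw [Finset.sum_congr rfl expand, Finset.sum_add_distrib, Finset.sum_sub_distrib,
      ← Finset.mul_sum, ← Finset.mul_sum, hcross, ← hDeq]
    field_simp [hMne, hVne]
    ring
  refine ⟨hVpos, hsum1, hsum2, by rw [hsum3]; ring, ?_, ?_⟩
  · intro a ha1 ha2
    have hk := key a ha1 ha2
    have hnn : 0 ≤ ∑ i, (a i / (K i:ℝ) - ((K i:ℝ) - Kbar)/D)^2 :=
      Finset.sum_nonneg fun i _ => sq_nonneg _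
    have h1D : 1 / D ≤ ∑ i, (a i / (K i:ℝ))^2 := by rw [hk]; linarith
    have h4 : (4:ℝ) / D = 4 * (1/D) := by ring
    linarith
  · intro a ha1 ha2 heq
    have hkey := key a ha1 ha2
    have h4 : (4:ℝ) / D = 4 * (1/D) := by ring
    have hS : ∑ i, (a i / (K i:ℝ))^2 = 1 / D := by linarith
    have hzero : ∑ i, (a i / (K i:ℝ) - ((K i:ℝ) - Kbar)/D)^2 = 0 := by linarith
    funext i
    have hterm := (Finset.sum_eq_zero_iff_of_nonneg
      (fun i _ => sq_nonneg (a i / (K i:ℝ) - ((K i:ℝ) - Kbar)/D))).mp hzero i (Finset.mem_univ i)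
    have hdiv : a i / (K i:ℝ) = ((K i:ℝ) - Kbar)/D := by
      have h := sq_eq_zero_iff.mp hterm
      linarith
    rw [hastar i]
    field_simp [hK0 i, hDne] at hdiv ⊢
    linear_combination hdiv
end

section
/- Let M ≥ 2 and take K_i = i for i = 1, ..., M. Then K̄ = (M+1)/2 and Var(K) = (M^2 - 1)/12, and the minimum of γ^2 = 4 Σ_{i=1}^{M} (a_i/i)^2 over all real vectors (a_1, ..., a_M) with Σ_{i=1}^{M} a_i = 1 and Σ_{i=1}^{M} a_i/i = 0 equals γ*^2 = 48/(M(M^2 - 1)), attained at a_i = 12 i (i - (M+1)/2)/(M(M^2 - 1)) = 12 (i/M^2) · (i/M - 1/2 - 1/(2M))/(1 - 1/M^2). -/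
open Finset

lemma sr1 (n : ℕ) : ∑ i ∈ Finset.range n, ((i : ℝ) + 1) = n * (n + 1) / 2 := by
  induction n with
  | zero => simp
  | succ k ih => rw [Finset.sum_range_succ, ih]; push_cast; ring

lemma sr2 (n : ℕ) : ∑ i ∈ Finset.range n, ((i : ℝ) + 1) ^ 2
    = (n : ℝ) * (n + 1) * (2 * n + 1) / 6 := by
  induction n with
  | zero => simp
  | succ k ih => rw [Finset.sum_range_succ, ih]; push_cast; ring

set_option maxHeartbeats 1000000 in
/-- The case `K_i = i`, `i = 1, …, M`: the mean is `(M+1)/2`, the population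
variance is `(M²-1)/12`, and the minimum of `γ² = 4 ∑ (a_i/i)²` subject to
`∑ a_i = 1`, `∑ a_i/i = 0` is `48/(M(M²-1))`, attained at
`a_i = 12 i (i - (M+1)/2)/(M(M²-1)) = 12 (i/M²)(i/M - 1/2 - 1/(2M))/(1 - 1/M²)`. -/
theorem stmt3 (M : ℕ) (hM : 2 ≤ M)
    (astar : Fin M → ℝ)
    (hastar : ∀ i : Fin M, astar i =
      12 * ((i : ℕ) + 1 : ℝ) * (((i : ℕ) + 1 : ℝ) - ((M : ℝ) + 1) / 2)
        / ((M : ℝ) * ((M : ℝ) ^ 2 - 1))) :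
    ((1 / (M : ℝ)) * ∑ i : Fin M, ((i : ℕ) + 1 : ℝ) = ((M : ℝ) + 1) / 2) ∧
    ((1 / (M : ℝ)) * ∑ i : Fin M, ((i : ℕ) + 1 : ℝ) ^ 2 - (((M : ℝ) + 1) / 2) ^ 2
      = ((M : ℝ) ^ 2 - 1) / 12) ∧
    (∀ i : Fin M, astar i =
      12 * (((i : ℕ) + 1 : ℝ) / (M : ℝ) ^ 2)
        * ((((i : ℕ) + 1 : ℝ)) / (M : ℝ) - 1 / 2 - 1 / (2 * (M : ℝ)))
        / (1 - 1 / (M : ℝ) ^ 2)) ∧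
    (∑ i, astar i = 1) ∧
    (∑ i : Fin M, astar i / ((i : ℕ) + 1 : ℝ) = 0) ∧
    (4 * ∑ i : Fin M, (astar i / ((i : ℕ) + 1 : ℝ)) ^ 2
      = 48 / ((M : ℝ) * ((M : ℝ) ^ 2 - 1))) ∧
    (∀ a : Fin M → ℝ, ∑ i, a i = 1 → ∑ i : Fin M, a i / ((i : ℕ) + 1 : ℝ) = 0 →
      48 / ((M : ℝ) * ((M : ℝ) ^ 2 - 1))
        ≤ 4 * ∑ i : Fin M, (a i / ((i : ℕ) + 1 : ℝ)) ^ 2) := by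
  have hM2 : (2 : ℝ) ≤ (M : ℝ) := by exact_mod_cast hM
  have hM0 : (M : ℝ) ≠ 0 := by linarith
  have hDpos : 0 < (M : ℝ) * ((M : ℝ) ^ 2 - 1) := by nlinarith
  have hD : (M : ℝ) * ((M : ℝ) ^ 2 - 1) ≠ 0 := ne_of_gt hDpos
  have hM21 : (M : ℝ) ^ 2 - 1 ≠ 0 := by nlinarith
  have hS1 : ∑ i : Fin M, ((i : ℕ) + 1 : ℝ) = (M : ℝ) * ((M : ℝ) + 1) / 2 := by
    rw [Fin.sum_univ_eq_sum_range (fun i => ((i : ℝ) + 1))]; exact sr1 M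
  have hS2 : ∑ i : Fin M, ((i : ℕ) + 1 : ℝ) ^ 2
      = (M : ℝ) * ((M : ℝ) + 1) * (2 * (M : ℝ) + 1) / 6 := by
    rw [Fin.sum_univ_eq_sum_range (fun i => ((i : ℝ) + 1) ^ 2)]; exact sr2 M
  have hcard : ∑ _i : Fin M, (1 : ℝ) = (M : ℝ) := by simp
  -- pointwise: astar i / (i+1)
  have hi0 : ∀ i : Fin M, ((i : ℕ) + 1 : ℝ) ≠ 0 := fun i => by positivity
  have hbstar : ∀ i : Fin M, astar i / ((i : ℕ) + 1 : ℝ)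
      = 12 * (((i : ℕ) + 1 : ℝ) - ((M : ℝ) + 1) / 2)
        / ((M : ℝ) * ((M : ℝ) ^ 2 - 1)) := by
    intro i
    rw [hastar i]
    field_simp
  -- part 1
  have p1 : (1 / (M : ℝ)) * ∑ i : Fin M, ((i : ℕ) + 1 : ℝ) = ((M : ℝ) + 1) / 2 := by
    rw [hS1]; field_simp
  -- part 2
  have p2 : (1 / (M : ℝ)) * ∑ i : Fin M, ((i : ℕ) + 1 : ℝ) ^ 2 - (((M : ℝ) + 1) / 2) ^ 2
      = ((M : ℝ) ^ 2 - 1) / 12 := by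
    rw [hS2]; field_simp; ring
  -- part 3
  have p3 : ∀ i : Fin M, astar i =
      12 * (((i : ℕ) + 1 : ℝ) / (M : ℝ) ^ 2)
        * ((((i : ℕ) + 1 : ℝ)) / (M : ℝ) - 1 / 2 - 1 / (2 * (M : ℝ)))
        / (1 - 1 / (M : ℝ) ^ 2) := by
    intro i
    rw [hastar i]
    rw [div_eq_div_iff hD (by intro h; apply hM21; field_simp at h; linarith)]
    field_simp
    ring
  -- part 4
  have p4 : ∑ i, astar i = 1 := by
    have : ∀ i : Fin M, astar i =
        (12 / ((M : ℝ) * ((M : ℝ) ^ 2 - 1))) * ((i : ℕ) + 1 : ℝ) ^ 2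
        - (12 * (((M : ℝ) + 1) / 2) / ((M : ℝ) * ((M : ℝ) ^ 2 - 1))) * ((i : ℕ) + 1 : ℝ) := by
      intro i; rw [hastar i]; field_simp
    rw [Finset.sum_congr rfl (fun i _ => this i), Finset.sum_sub_distrib,
      ← Finset.mul_sum, ← Finset.mul_sum, hS1, hS2]
    field_simp
    ring
  -- part 5
  have p5 : ∑ i : Fin M, astar i / ((i : ℕ) + 1 : ℝ) = 0 := by
    have : ∀ i : Fin M, astar i / ((i : ℕ) + 1 : ℝ) =
        (12 / ((M : ℝ) * ((M : ℝ) ^ 2 - 1))) * ((i : ℕ) + 1 : ℝ)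
        - (12 * (((M : ℝ) + 1) / 2) / ((M : ℝ) * ((M : ℝ) ^ 2 - 1))) * 1 := by
      intro i; rw [hbstar i]; field_simp
    rw [Finset.sum_congr rfl (fun i _ => this i), Finset.sum_sub_distrib,
      ← Finset.mul_sum, ← Finset.mul_sum, hS1, hcard]
    field_simp
    ring
  -- part 6
  have p6 : 4 * ∑ i : Fin M, (astar i / ((i : ℕ) + 1 : ℝ)) ^ 2
      = 48 / ((M : ℝ) * ((M : ℝ) ^ 2 - 1)) := by
    have : ∀ i : Fin M, (astar i / ((i : ℕ) + 1 : ℝ)) ^ 2 =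
        (144 / ((M : ℝ) * ((M : ℝ) ^ 2 - 1)) ^ 2) * ((i : ℕ) + 1 : ℝ) ^ 2
        - (144 * ((M : ℝ) + 1) / ((M : ℝ) * ((M : ℝ) ^ 2 - 1)) ^ 2) * ((i : ℕ) + 1 : ℝ)
        + (144 * (((M : ℝ) + 1) / 2) ^ 2 / ((M : ℝ) * ((M : ℝ) ^ 2 - 1)) ^ 2) * 1 := by
      intro i; rw [hbstar i]; field_simp; ring
    rw [Finset.sum_congr rfl (fun i _ => this i), Finset.sum_add_distrib,
      Finset.sum_sub_distrib, ← Finset.mul_sum, ← Finset.mul_sum, ← Finset.mul_sum,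
      hS1, hS2, hcard]
    field_simp
    ring
  refine ⟨p1, p2, p3, p4, p5, p6, ?_⟩
  -- part 7: minimization
  intro a ha1 ha2
  have hcross : ∑ i : Fin M, (a i / ((i : ℕ) + 1 : ℝ)) * (astar i / ((i : ℕ) + 1 : ℝ))
      = 12 / ((M : ℝ) * ((M : ℝ) ^ 2 - 1)) := by
    have : ∀ i : Fin M, (a i / ((i : ℕ) + 1 : ℝ)) * (astar i / ((i : ℕ) + 1 : ℝ))
        = (12 / ((M : ℝ) * ((M : ℝ) ^ 2 - 1))) * a i
        - (12 * (((M : ℝ) + 1) / 2) / ((M : ℝ) * ((M : ℝ) ^ 2 - 1)))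
            * (a i / ((i : ℕ) + 1 : ℝ)) := by
      intro i
      rw [hbstar i]
      have hi := hi0 i
      field_simp
    rw [Finset.sum_congr rfl (fun i _ => this i), Finset.sum_sub_distrib,
      ← Finset.mul_sum, ← Finset.mul_sum, ha1, ha2]
    ring
  have hsq : 0 ≤ ∑ i : Fin M,
      (a i / ((i : ℕ) + 1 : ℝ) - astar i / ((i : ℕ) + 1 : ℝ)) ^ 2 :=
    Finset.sum_nonneg fun i _ => sq_nonneg _
  have hexp : ∑ i : Fin M,
      (a i / ((i : ℕ) + 1 : ℝ) - astar i / ((i : ℕ) + 1 : ℝ)) ^ 2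
      = ∑ i : Fin M, (a i / ((i : ℕ) + 1 : ℝ)) ^ 2
        - 2 * ∑ i : Fin M, (a i / ((i : ℕ) + 1 : ℝ)) * (astar i / ((i : ℕ) + 1 : ℝ))
        + ∑ i : Fin M, (astar i / ((i : ℕ) + 1 : ℝ)) ^ 2 := by
    rw [Finset.mul_sum, ← Finset.sum_sub_distrib, ← Finset.sum_add_distrib]
    exact Finset.sum_congr rfl fun i _ => by ring
  have hbsq : ∑ i : Fin M, (astar i / ((i : ℕ) + 1 : ℝ)) ^ 2
      = 12 / ((M : ℝ) * ((M : ℝ) ^ 2 - 1)) := by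
    have h48' : (48 : ℝ) / ((M : ℝ) * ((M : ℝ) ^ 2 - 1))
        = 4 * (12 / ((M : ℝ) * ((M : ℝ) ^ 2 - 1))) := by ring
    linarith [p6, h48']
  rw [hexp, hcross, hbsq] at hsq
  have h48 : 48 / ((M : ℝ) * ((M : ℝ) ^ 2 - 1))
      = 4 * (12 / ((M : ℝ) * ((M : ℝ) ^ 2 - 1))) := by ring
  rw [h48]
  linarith
end

section
/- Let h = h_0, h_1, h_2, h_3 be real functions on [0,1] such that for i = 0, 1, 2 the function h_i is 3−i times continuously differentiable on [0,1] and h_3 is continuous on [0,1]. Assume ∫_0^1 x h(x) dx = 1 and ∫_0^1 h(x) dx = 0, and assume the three conditions: ∫_0^1 h_1(x) dx + (1/2)(h(1) − h(0)) = 0; ∫_0^1 h_2(x) dx + (1/2)(h_1(1) − h_1(0)) + (1/12)(h'(1) − h'(0)) = 0; and ∫_0^1 h_3(x) dx + (1/12)(h_1'(1) − h_1'(0)) = 0. For each M ∈ ℕ let w_M : [0,1] → ℝ satisfy sup_{x ∈ [0,1]} |w_M(x) − (x h(x) + M^{-1} x h_1(x) + M^{-2} x h_2(x) + M^{-3} x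 h_3(x))| = o(M^{-3}) as M → ∞, and set a_{M,i} = (1/M) w_M(i/M) for i = 1, ..., M. Then Σ_{i=1}^{M} a_{M,i}/i = o(M^{-3}) as M → ∞. -/
open MeasureTheory Filter Set

open intervalIntegral

noncomputable def emS (f : ℝ → ℝ) (M : ℕ) : ℝ :=
  ∑ i ∈ Finset.range M, f (((i:ℝ)+1)/(M:ℝ)) / (M:ℝ)

noncomputable def emR (f : ℝ → ℝ) (k M : ℕ) : ℝ :=
  ∑ i ∈ Finset.range M, ∫ x in ((i:ℝ)/(M:ℝ))..(((i:ℝ)+1)/(M:ℝ)), f x * (x - (i:ℝ)/(M:ℝ))^k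

lemma em_sub {M i : ℕ} (hM : 1 ≤ M) (hi : i < M) :
    Set.uIcc ((i:ℝ)/(M:ℝ)) (((i:ℝ)+1)/(M:ℝ)) ⊆ Set.Icc 0 1 := by
  have hMpos : (0:ℝ) < M := by exact_mod_cast hM
  have h1 : (i:ℝ)/(M:ℝ) ≤ ((i:ℝ)+1)/(M:ℝ) := by
    gcongr
    linarith
  rw [Set.uIcc_of_le h1]
  intro x hx
  constructor
  · exact le_trans (by positivity) hx.1
  · refine hx.2.trans ?_
    rw [div_le_one hMpos]
    have : (i:ℝ) + 1 ≤ (M:ℝ) := by exact_mod_cast hi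
    linarith

lemma em_le {M i : ℕ} (hM : 1 ≤ M) : (i:ℝ)/(M:ℝ) ≤ ((i:ℝ)+1)/(M:ℝ) := by
  have hMpos : (0:ℝ) < M := by exact_mod_cast hM
  gcongr
  linarith

lemma em_mem {M i : ℕ} (hM : 1 ≤ M) (hi : i < M) {x : ℝ}
    (hx : x ∈ Set.uIcc ((i:ℝ)/(M:ℝ)) (((i:ℝ)+1)/(M:ℝ))) : x ∈ Set.Icc (0:ℝ) 1 :=
  em_sub hM hi hx

lemma emR_zero {f : ℝ → ℝ} (hf : ContinuousOn f (Set.Icc 0 1)) {M : ℕ} (hM : 1 ≤ M) :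
    emR f 0 M = ∫ x in (0:ℝ)..1, f x := by
  have hMpos : (0:ℝ) < M := by exact_mod_cast hM
  have key : ∑ i ∈ Finset.range M,
      ∫ x in (((i:ℕ):ℝ)/(M:ℝ))..((((i+1:ℕ)):ℝ)/(M:ℝ)), f x
        = ∫ x in (((0:ℕ):ℝ)/(M:ℝ))..(((M:ℕ):ℝ)/(M:ℝ)), f x := by
    apply intervalIntegral.sum_integral_adjacent_intervals (f := f)
      (a := fun k : ℕ => ((k:ℕ):ℝ)/(M:ℝ))
    intro k hk
    apply ContinuousOn.intervalIntegrable
    apply hf.mono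
    have := em_sub (M := M) (i := k) hM hk
    push_cast
    push_cast at this
    exact this
  unfold emR
  simp only [pow_zero, mul_one]
  push_cast at key
  rw [key]
  norm_num
  rw [div_self (ne_of_gt hMpos)]

lemma emS_bound {f : ℝ → ℝ} {K : ℝ} (hK : ∀ x ∈ Set.Icc (0:ℝ) 1, |f x| ≤ K)
    {M : ℕ} (hM : 1 ≤ M) : |emS f M| ≤ K := by
  have hMpos : (0:ℝ) < M := by exact_mod_cast hM
  calc |emS f M| ≤ ∑ i ∈ Finset.range M, |f (((i:ℝ)+1)/(M:ℝ)) / (M:ℝ)| :=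
        Finset.abs_sum_le_sum_abs _ _
    _ ≤ ∑ i ∈ Finset.range M, K / (M:ℝ) := by
        apply Finset.sum_le_sum
        intro i hi
        rw [abs_div, abs_of_pos hMpos]
        gcongr
        apply hK
        have := em_mem hM (Finset.mem_range.mp hi) (Set.right_mem_uIcc)
        exact this
    _ = K := by
        rw [Finset.sum_const, Finset.card_range, nsmul_eq_mul]
        field_simp

lemma emR_bound {f : ℝ → ℝ} {K : ℝ} (hK : ∀ x ∈ Set.Icc (0:ℝ) 1, |f x| ≤ K)
    {k M : ℕ} (hM : 1 ≤ M) : |emR f k M| ≤ K / (M:ℝ)^k := by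
  have hMpos : (0:ℝ) < M := by exact_mod_cast hM
  have hK0 : 0 ≤ K := le_trans (abs_nonneg _) (hK 0 (by norm_num))
  calc |emR f k M| ≤ ∑ i ∈ Finset.range M,
      |∫ x in ((i:ℝ)/(M:ℝ))..(((i:ℝ)+1)/(M:ℝ)), f x * (x - (i:ℝ)/(M:ℝ))^k| :=
        Finset.abs_sum_le_sum_abs _ _
    _ ≤ ∑ i ∈ Finset.range M, K * (1/(M:ℝ))^k * (1/(M:ℝ)) := by
        apply Finset.sum_le_sum
        intro i hi
        have hi' := Finset.mem_range.mp hi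
        have hle := em_le (M := M) (i := i) hM
        have := intervalIntegral.norm_integral_le_of_norm_le_const
          (a := (i:ℝ)/(M:ℝ)) (b := ((i:ℝ)+1)/(M:ℝ)) (C := K * (1/(M:ℝ))^k)
          (f := fun x => f x * (x - (i:ℝ)/(M:ℝ))^k) ?_
        · rw [Real.norm_eq_abs] at this
          refine this.trans_eq ?_
          rw [abs_of_nonneg (by linarith)]
          congr 1
          field_simp
          ring
        · intro x hx
          rw [Set.uIoc_of_le hle] at hx
          have hx1 : x ∈ Set.Icc (0:ℝ) 1 := em_mem hM hi'
            (by rw [Set.uIcc_of_le hle]; exact ⟨le_of_lt hx.1, hx.2⟩)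
          rw [Real.norm_eq_abs, abs_mul, abs_pow]
          apply mul_le_mul (hK x hx1) ?_ (by positivity) hK0
          apply pow_le_pow_left₀ (abs_nonneg _)
          rw [abs_of_nonneg (by linarith [hx.1])]
          have : ((i:ℝ)+1)/(M:ℝ) - (i:ℝ)/(M:ℝ) = 1/(M:ℝ) := by field_simp; ring
          linarith [hx.2]
    _ = K / (M:ℝ)^k := by
        rw [Finset.sum_const, Finset.card_range, nsmul_eq_mul]
        field_simp
        ring
        rw [mul_assoc, ← mul_pow, mul_inv_cancel₀ hMpos.ne', one_pow, mul_one]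

lemma emR_step {f g : ℝ → ℝ} (hf : ContinuousOn f (Set.Icc 0 1))
    (hg : ContinuousOn g (Set.Icc 0 1))
    (hd : ∀ x ∈ Set.Ioo (0:ℝ) 1, HasDerivAt f (g x) x)
    {M : ℕ} (hM : 1 ≤ M) (k : ℕ) :
    emR f k M = emS f M / (((k:ℝ)+1) * (M:ℝ)^k) - emR g (k+1) M / ((k:ℝ)+1) := by
  have hMpos : (0:ℝ) < M := by exact_mod_cast hM
  have hk1 : (0:ℝ) < (k:ℝ)+1 := by positivity
  have key : ∀ i ∈ Finset.range M,
      (∫ x in ((i:ℝ)/(M:ℝ))..(((i:ℝ)+1)/(M:ℝ)), f x * (x - (i:ℝ)/(M:ℝ))^k)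
        = f (((i:ℝ)+1)/(M:ℝ)) / (M:ℝ) * ((1/(M:ℝ))^k / ((k:ℝ)+1))
          - (∫ x in ((i:ℝ)/(M:ℝ))..(((i:ℝ)+1)/(M:ℝ)), g x * (x - (i:ℝ)/(M:ℝ))^(k+1))
              / ((k:ℝ)+1) := by
    intro i hi
    have hi' := Finset.mem_range.mp hi
    set a : ℝ := (i:ℝ)/(M:ℝ) with ha
    set b : ℝ := ((i:ℝ)+1)/(M:ℝ) with hb
    have hle : a ≤ b := em_le hM
    have hsub : Set.uIcc a b ⊆ Set.Icc 0 1 := em_sub hM hi'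
    have hIccsub : Set.Icc a b ⊆ Set.Icc 0 1 := by
      rwa [Set.uIcc_of_le hle] at hsub
    have ha0 : 0 ≤ a := (hIccsub (Set.left_mem_Icc.mpr hle)).1
    have hb1 : b ≤ 1 := (hIccsub (Set.right_mem_Icc.mpr hle)).2
    have hba : b - a = 1/(M:ℝ) := by rw [ha, hb]; field_simp; ring
    set u : ℝ → ℝ := fun x => f x * (x - a)^(k+1) / ((k:ℝ)+1) with hu
    have hucont : ContinuousOn u (Set.Icc a b) := by
      apply ContinuousOn.div_const
      exact (hf.mono hIccsub).mul ((continuous_id.sub continuous_const).pow (k+1)).continuousOn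
    have huderiv : ∀ x ∈ Set.Ioo a b,
        HasDerivAt u (f x * (x - a)^k + g x * (x - a)^(k+1) / ((k:ℝ)+1)) x := by
      intro x hx
      have hx01 : x ∈ Set.Ioo (0:ℝ) 1 := ⟨lt_of_le_of_lt ha0 hx.1, lt_of_lt_of_le hx.2 hb1⟩
      have h1 : HasDerivAt (fun y => (y - a)^(k+1)) (((k:ℝ)+1) * (x - a)^k) x := by
        have := ((hasDerivAt_id x).sub_const a).fun_pow (k+1)
        simpa using this
      have h2 : HasDerivAt (fun y => f y * (y - a)^(k+1) / ((k:ℝ)+1))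
          ((g x * (x - a)^(k+1) + f x * (((k:ℝ)+1) * (x - a)^k)) / ((k:ℝ)+1)) x :=
        ((hd x hx01).mul h1).div_const ((k:ℝ)+1)
      convert h2 using 1
      field_simp
      ring
    have hintg : IntervalIntegrable (fun x => f x * (x - a)^k
        + g x * (x - a)^(k+1) / ((k:ℝ)+1)) volume a b := by
      apply ContinuousOn.intervalIntegrable
      apply ContinuousOn.add
      · exact (hf.mono hsub).mul ((continuous_id.sub continuous_const).pow k).continuousOn
      · exact (((hg.mono hsub).mul
          ((continuous_id.sub continuous_const).pow (k+1)).continuousOn).div_const _)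
    have hftc := intervalIntegral.integral_eq_sub_of_hasDerivAt_of_le hle hucont huderiv hintg
    have hia : u a = 0 := by simp [hu]
    have hib : u b = f b * (1/(M:ℝ))^(k+1) / ((k:ℝ)+1) := by
      rw [hu]; simp only; rw [hba]
    have hint1 : IntervalIntegrable (fun x => f x * (x - a)^k) volume a b :=
      ContinuousOn.intervalIntegrable
        ((hf.mono hsub).mul ((continuous_id.sub continuous_const).pow k).continuousOn)
    have hint2 : IntervalIntegrable (fun x => g x * (x - a)^(k+1) / ((k:ℝ)+1)) volume a b :=
      ContinuousOn.intervalIntegrable (((hg.mono hsub).mul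
        ((continuous_id.sub continuous_const).pow (k+1)).continuousOn).div_const _)
    rw [intervalIntegral.integral_add hint1 hint2] at hftc
    have hdiv : (∫ x in a..b, g x * (x - a)^(k+1) / ((k:ℝ)+1))
        = (∫ x in a..b, g x * (x - a)^(k+1)) / ((k:ℝ)+1) := by
      rw [intervalIntegral.integral_div]
    rw [hdiv] at hftc
    have : (∫ x in a..b, f x * (x - a)^k)
        = u b - u a - (∫ x in a..b, g x * (x - a)^(k+1)) / ((k:ℝ)+1) := by linarith
    rw [this, hia, hib]
    congr 1
    rw [sub_zero]
    field_simp
    ring_nf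
    rw [mul_inv_cancel_right₀ hMpos.ne']
  unfold emR
  rw [Finset.sum_congr rfl key, Finset.sum_sub_distrib]
  congr 1
  · rw [← Finset.sum_mul]
    show emS f M * ((1/(M:ℝ))^k / ((k:ℝ)+1)) = _
    field_simp
    ring_nf
    rw [mul_assoc, ← mul_pow, mul_inv_cancel₀ hMpos.ne', one_pow, mul_one]
  · rw [Finset.sum_div]

lemma emS_eq {f g : ℝ → ℝ} (hf : ContinuousOn f (Set.Icc 0 1))
    (hg : ContinuousOn g (Set.Icc 0 1))
    (hd : ∀ x ∈ Set.Ioo (0:ℝ) 1, HasDerivAt f (g x) x)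
    {M : ℕ} (hM : 1 ≤ M) :
    emS f M = (∫ x in (0:ℝ)..1, f x) + emR g 1 M := by
  have h := emR_step hf hg hd hM 0
  rw [emR_zero hf hM] at h
  norm_num at h
  linarith

lemma em_ftc {f g : ℝ → ℝ} (hf : ContinuousOn f (Set.Icc 0 1))
    (hg : ContinuousOn g (Set.Icc 0 1))
    (hd : ∀ x ∈ Set.Ioo (0:ℝ) 1, HasDerivAt f (g x) x) :
    ∫ x in (0:ℝ)..1, g x = f 1 - f 0 := by
  apply intervalIntegral.integral_eq_sub_of_hasDerivAt_of_le zero_le_one hf hd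
  apply ContinuousOn.intervalIntegrable
  rwa [Set.uIcc_of_le (zero_le_one : (0:ℝ) ≤ 1)]

lemma em_chain {f : ℝ → ℝ} {n : WithTop ℕ∞} (hf : ContDiffOn ℝ n f (Set.Icc 0 1))
    (hn : 1 ≤ n) :
    ∀ x ∈ Set.Ioo (0:ℝ) 1, HasDerivAt f (derivWithin f (Set.Icc 0 1) x) x := by
  intro x hx
  have hmem : Set.Icc (0:ℝ) 1 ∈ nhds x := Icc_mem_nhds hx.1 hx.2
  have hdiff : DifferentiableWithinAt ℝ f (Set.Icc 0 1) x :=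
    (hf.differentiableOn (ne_of_gt (lt_of_lt_of_le zero_lt_one hn))) x (Set.mem_Icc_of_Ioo hx)
  exact hdiff.hasDerivWithinAt.hasDerivAt hmem

lemma emS_Icc (f : ℝ → ℝ) (M : ℕ) :
    ∑ i ∈ Finset.Icc 1 M, f ((i:ℝ)/(M:ℝ)) / (M:ℝ) = emS f M := by
  unfold emS
  rw [← Finset.Ico_add_one_right_eq_Icc, Finset.sum_Ico_eq_sum_range]
  simp only [Nat.succ_sub_one, Nat.add_sub_cancel]
  apply Finset.sum_congr rfl
  intro i _
  congr 2
  push_cast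
  ring

lemma em_arith (m i a b c d : ℝ) (hm : m ≠ 0) (hi : i ≠ 0) :
    m^3 * (((1/m) * ((i/m) * a + (i/m) * b / m + (i/m) * c / m^2 + (i/m) * d / m^3)) / i)
      = m^2 * (a/m) + m * (b/m) + (c/m) + (1/m) * (d/m) := by
  field_simp

set_option maxHeartbeats 1000000 in
/-- Theorem 2 (bias-cancellation condition): with weights
`a_{M,i} = (1/M) w_M(i/M)`, where `w_M(x) = x h(x) + x h₁(x)/M + x h₂(x)/M² +
x h₃(x)/M³ + o(M⁻³)` uniformly on `[0,1]`, and where `h, h₁, h₂, h₃` satisfy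
the stated integral/boundary conditions, one has `∑_{i=1}^M a_{M,i}/i = o(M⁻³)`. -/
theorem stmt5 (h h1 h2 h3 : ℝ → ℝ)
    (hh : ContDiffOn ℝ 3 h (Set.Icc 0 1))
    (hh1 : ContDiffOn ℝ 2 h1 (Set.Icc 0 1))
    (hh2 : ContDiffOn ℝ 1 h2 (Set.Icc 0 1))
    (hh3 : ContinuousOn h3 (Set.Icc 0 1))
    (hint1 : ∫ x in (0:ℝ)..1, x * h x = 1)
    (hint0 : ∫ x in (0:ℝ)..1, h x = 0)
    (hc1 : (∫ x in (0:ℝ)..1, h1 x) + (1 / 2) * (h 1 - h 0) = 0)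
    (hc2 : (∫ x in (0:ℝ)..1, h2 x) + (1 / 2) * (h1 1 - h1 0)
      + (1 / 12) * (derivWithin h (Set.Icc 0 1) 1 - derivWithin h (Set.Icc 0 1) 0) = 0)
    (hc3 : (∫ x in (0:ℝ)..1, h3 x)
      + (1 / 12) * (derivWithin h1 (Set.Icc 0 1) 1 - derivWithin h1 (Set.Icc 0 1) 0) = 0)
    (w : ℕ → ℝ → ℝ) (e : ℕ → ℝ)
    (hw : ∀ M : ℕ, 1 ≤ M → ∀ x ∈ Set.Icc (0:ℝ) 1,
      |w M x - (x * h x + x * h1 x / (M : ℝ) + x * h2 x / (M : ℝ) ^ 2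
        + x * h3 x / (M : ℝ) ^ 3)| ≤ e M)
    (he : Tendsto (fun M : ℕ => (M : ℝ) ^ 3 * e M) atTop (nhds 0)) :
    Tendsto (fun M : ℕ =>
        (M : ℝ) ^ 3 * ∑ i ∈ Finset.Icc 1 M, ((1 / (M : ℝ)) * w M ((i : ℝ) / (M : ℝ))) / (i : ℝ))
      atTop (nhds 0) := by
  have uD : UniqueDiffOn ℝ (Set.Icc (0:ℝ) 1) := uniqueDiffOn_Icc one_pos
  set D1 := derivWithin h (Set.Icc (0:ℝ) 1) with hD1def
  set D2 := derivWithin D1 (Set.Icc (0:ℝ) 1) with hD2def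
  set D3 := derivWithin D2 (Set.Icc (0:ℝ) 1) with hD3def
  set E1 := derivWithin h1 (Set.Icc (0:ℝ) 1) with hE1def
  set E2 := derivWithin E1 (Set.Icc (0:ℝ) 1) with hE2def
  set F1 := derivWithin h2 (Set.Icc (0:ℝ) 1) with hF1def
  have hD1 : ContDiffOn ℝ 2 D1 (Set.Icc 0 1) := hh.derivWithin uD (by norm_num)
  have hD2 : ContDiffOn ℝ 1 D2 (Set.Icc 0 1) := hD1.derivWithin uD (by norm_num)
  have hE1 : ContDiffOn ℝ 1 E1 (Set.Icc 0 1) := hh1.derivWithin uD (by norm_num)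
  have ch : ContinuousOn h (Set.Icc (0:ℝ) 1) := hh.continuousOn
  have cD1 : ContinuousOn D1 (Set.Icc (0:ℝ) 1) := hD1.continuousOn
  have cD2 : ContinuousOn D2 (Set.Icc (0:ℝ) 1) := hD2.continuousOn
  have cD3 : ContinuousOn D3 (Set.Icc (0:ℝ) 1) :=
    hD2.continuousOn_derivWithin uD (by norm_num)
  have ch1 : ContinuousOn h1 (Set.Icc (0:ℝ) 1) := hh1.continuousOn
  have cE1 : ContinuousOn E1 (Set.Icc (0:ℝ) 1) := hE1.continuousOn
  have cE2 : ContinuousOn E2 (Set.Icc (0:ℝ) 1) :=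
    hE1.continuousOn_derivWithin uD (by norm_num)
  have ch2 : ContinuousOn h2 (Set.Icc (0:ℝ) 1) := hh2.continuousOn
  have cF1 : ContinuousOn F1 (Set.Icc (0:ℝ) 1) :=
    hh2.continuousOn_derivWithin uD (by norm_num)
  have dh := em_chain hh (by norm_num)
  have dD1 := em_chain hD1 (by norm_num)
  have dD2 := em_chain hD2 (by norm_num)
  have dh1 := em_chain hh1 (by norm_num)
  have dE1 := em_chain hE1 (by norm_num)
  have dh2 := em_chain hh2 (by norm_num)
  have iD1 : ∫ x in (0:ℝ)..1, D1 x = h 1 - h 0 := em_ftc ch cD1 dh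
  have iD2 : ∫ x in (0:ℝ)..1, D2 x = D1 1 - D1 0 := em_ftc cD1 cD2 dD1
  have iE1 : ∫ x in (0:ℝ)..1, E1 x = h1 1 - h1 0 := em_ftc ch1 cE1 dh1
  obtain ⟨K1, hK1⟩ := (isCompact_Icc).exists_bound_of_continuousOn cD3
  obtain ⟨K2, hK2⟩ := (isCompact_Icc).exists_bound_of_continuousOn cE2
  obtain ⟨K3, hK3⟩ := (isCompact_Icc).exists_bound_of_continuousOn cF1
  obtain ⟨K4, hK4⟩ := (isCompact_Icc).exists_bound_of_continuousOn hh3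
  set K := max (max K1 K2) (max K3 K4) with hKdef
  have hKD3 : ∀ x ∈ Set.Icc (0:ℝ) 1, |D3 x| ≤ K := fun x hx =>
    le_trans (hK1 x hx) ((le_max_left K1 K2).trans (le_max_left _ _))
  have hKE2 : ∀ x ∈ Set.Icc (0:ℝ) 1, |E2 x| ≤ K := fun x hx =>
    le_trans (hK2 x hx) ((le_max_right K1 K2).trans (le_max_left _ _))
  have hKF1 : ∀ x ∈ Set.Icc (0:ℝ) 1, |F1 x| ≤ K := fun x hx =>
    le_trans (hK3 x hx) ((le_max_left K3 K4).trans (le_max_right _ _))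
  have hKh3 : ∀ x ∈ Set.Icc (0:ℝ) 1, |h3 x| ≤ K := fun x hx =>
    le_trans (hK4 x hx) ((le_max_right K3 K4).trans (le_max_right _ _))
  have hK0 : 0 ≤ K := le_trans (abs_nonneg _) (hKD3 0 (by norm_num))
  have main : ∀ M : ℕ, 1 ≤ M →
      (M:ℝ)^2 * emS h M + (M:ℝ) * emS h1 M + emS h2 M + (1/(M:ℝ)) * emS h3 M
        = (1/12)*emR D3 1 M - ((M:ℝ)/4)*emR D3 2 M + ((M:ℝ)^2/6)*emR D3 3 M
          + (1/2)*emR E2 1 M - ((M:ℝ)/2)*emR E2 2 M + emR F1 1 M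
          + (1/(M:ℝ))*emS h3 M := by
    intro M hM
    have hm0 : (M:ℝ) ≠ 0 := by
      have : (0:ℝ) < M := by exact_mod_cast hM
      exact ne_of_gt this
    have A := emS_eq ch cD1 dh hM
    have B := emR_step cD1 cD2 dD1 hM 1
    have C := emR_step cD2 cD3 dD2 hM 2
    have D := emS_eq cD1 cD2 dD1 hM
    have E := emR_step cD2 cD3 dD2 hM 1
    have F := emS_eq cD2 cD3 dD2 hM
    have G := emS_eq ch1 cE1 dh1 hM
    have H := emR_step cE1 cE2 dE1 hM 1
    have I := emS_eq cE1 cE2 dE1 hM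
    have J := emS_eq ch2 cF1 dh2 hM
    rw [iD1] at D
    rw [iD2] at F
    rw [iE1] at I
    have eq1 : (M:ℝ)^2 * emS h M = ((M:ℝ)/2)*(h 1 - h 0) + (1/12)*(D1 1 - D1 0)
        + (1/12)*emR D3 1 M - ((M:ℝ)/4)*emR D3 2 M + ((M:ℝ)^2/6)*emR D3 3 M := by
      rw [A, hint0, zero_add, B, D, E, C, F]
      push_cast
      field_simp
      ring
    have eq2 : (M:ℝ) * emS h1 M = (M:ℝ)*(∫ x in (0:ℝ)..1, h1 x) + (1/2)*(h1 1 - h1 0)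
        + (1/2)*emR E2 1 M - ((M:ℝ)/2)*emR E2 2 M := by
      rw [G, H, I]
      push_cast
      field_simp
      ring
    linear_combination eq1 + eq2 + J + (M:ℝ)*hc1 + hc2
  have bound : ∀ M : ℕ, 1 ≤ M →
      |(M:ℝ)^2 * emS h M + (M:ℝ) * emS h1 M + emS h2 M + (1/(M:ℝ)) * emS h3 M|
        ≤ 7*K/(M:ℝ) := by
    intro M hM
    have hmpos : (0:ℝ) < M := by exact_mod_cast hM
    have hm1 : (1:ℝ) ≤ M := by exact_mod_cast hM
    have hKm : 0 ≤ K/(M:ℝ) := div_nonneg hK0 (le_of_lt hmpos)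
    rw [main M hM]
    have b1 := emR_bound (k := 1) (M := M) hKD3 hM
    have b2 := emR_bound (k := 2) (M := M) hKD3 hM
    have b3 := emR_bound (k := 3) (M := M) hKD3 hM
    have b4 := emR_bound (k := 1) (M := M) hKE2 hM
    have b5 := emR_bound (k := 2) (M := M) hKE2 hM
    have b6 := emR_bound (k := 1) (M := M) hKF1 hM
    have b7 := emS_bound hKh3 hM
    have c1 : |(1/12)*emR D3 1 M| ≤ K/(M:ℝ) := by
      rw [abs_mul, abs_of_nonneg (by norm_num : (0:ℝ) ≤ 1/12)]
      calc (1/12) * |emR D3 1 M| ≤ 1 * (K/(M:ℝ)^1) := by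
            apply mul_le_mul (by norm_num) b1 (abs_nonneg _) (by norm_num)
        _ = K/(M:ℝ) := by rw [one_mul, pow_one]
    have c2 : |((M:ℝ)/4)*emR D3 2 M| ≤ K/(M:ℝ) := by
      rw [abs_mul, abs_of_nonneg (by positivity : (0:ℝ) ≤ (M:ℝ)/4)]
      calc (M:ℝ)/4 * |emR D3 2 M| ≤ (M:ℝ)/4 * (K/(M:ℝ)^2) :=
            mul_le_mul_of_nonneg_left b2 (by positivity)
        _ = K/(4*(M:ℝ)) := by field_simp
        _ ≤ K/(M:ℝ) := by gcongr; linarith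
    have c3 : |((M:ℝ)^2/6)*emR D3 3 M| ≤ K/(M:ℝ) := by
      rw [abs_mul, abs_of_nonneg (by positivity : (0:ℝ) ≤ (M:ℝ)^2/6)]
      calc (M:ℝ)^2/6 * |emR D3 3 M| ≤ (M:ℝ)^2/6 * (K/(M:ℝ)^3) :=
            mul_le_mul_of_nonneg_left b3 (by positivity)
        _ = K/(6*(M:ℝ)) := by field_simp
        _ ≤ K/(M:ℝ) := by gcongr; linarith
    have c4 : |(1/2)*emR E2 1 M| ≤ K/(M:ℝ) := by
      rw [abs_mul, abs_of_nonneg (by norm_num : (0:ℝ) ≤ 1/2)]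
      calc (1/2) * |emR E2 1 M| ≤ 1 * (K/(M:ℝ)^1) := by
            apply mul_le_mul (by norm_num) b4 (abs_nonneg _) (by norm_num)
        _ = K/(M:ℝ) := by rw [one_mul, pow_one]
    have c5 : |((M:ℝ)/2)*emR E2 2 M| ≤ K/(M:ℝ) := by
      rw [abs_mul, abs_of_nonneg (by positivity : (0:ℝ) ≤ (M:ℝ)/2)]
      calc (M:ℝ)/2 * |emR E2 2 M| ≤ (M:ℝ)/2 * (K/(M:ℝ)^2) :=
            mul_le_mul_of_nonneg_left b5 (by positivity)
        _ = K/(2*(M:ℝ)) := by field_simp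
        _ ≤ K/(M:ℝ) := by gcongr; linarith
    have c6 : |emR F1 1 M| ≤ K/(M:ℝ) := by
      calc |emR F1 1 M| ≤ K/(M:ℝ)^1 := b6
        _ = K/(M:ℝ) := by rw [pow_one]
    have c7 : |(1/(M:ℝ))*emS h3 M| ≤ K/(M:ℝ) := by
      rw [abs_mul, abs_of_nonneg (by positivity : (0:ℝ) ≤ 1/(M:ℝ))]
      calc (1/(M:ℝ)) * |emS h3 M| ≤ (1/(M:ℝ)) * K :=
            mul_le_mul_of_nonneg_left b7 (by positivity)
        _ = K/(M:ℝ) := by ring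
    calc |(1/12)*emR D3 1 M - ((M:ℝ)/4)*emR D3 2 M + ((M:ℝ)^2/6)*emR D3 3 M
          + (1/2)*emR E2 1 M - ((M:ℝ)/2)*emR E2 2 M + emR F1 1 M + (1/(M:ℝ))*emS h3 M|
        ≤ |(1/12)*emR D3 1 M - ((M:ℝ)/4)*emR D3 2 M + ((M:ℝ)^2/6)*emR D3 3 M
          + (1/2)*emR E2 1 M - ((M:ℝ)/2)*emR E2 2 M + emR F1 1 M| + |(1/(M:ℝ))*emS h3 M| :=
          abs_add_le _ _
      _ ≤ (|(1/12)*emR D3 1 M - ((M:ℝ)/4)*emR D3 2 M + ((M:ℝ)^2/6)*emR D3 3 M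
          + (1/2)*emR E2 1 M - ((M:ℝ)/2)*emR E2 2 M| + |emR F1 1 M|) + |(1/(M:ℝ))*emS h3 M| :=
          add_le_add_left (abs_add_le _ _) _
      _ ≤ ((|(1/12)*emR D3 1 M - ((M:ℝ)/4)*emR D3 2 M + ((M:ℝ)^2/6)*emR D3 3 M
          + (1/2)*emR E2 1 M| + |((M:ℝ)/2)*emR E2 2 M|) + |emR F1 1 M|) + |(1/(M:ℝ))*emS h3 M| :=
          add_le_add_left (add_le_add_left (abs_sub _ _) _) _
      _ ≤ (((|(1/12)*emR D3 1 M - ((M:ℝ)/4)*emR D3 2 M + ((M:ℝ)^2/6)*emR D3 3 M|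
          + |(1/2)*emR E2 1 M|) + |((M:ℝ)/2)*emR E2 2 M|) + |emR F1 1 M|) + |(1/(M:ℝ))*emS h3 M| :=
          add_le_add_left (add_le_add_left (add_le_add_left (abs_add_le _ _) _) _) _
      _ ≤ ((((|(1/12)*emR D3 1 M - ((M:ℝ)/4)*emR D3 2 M| + |((M:ℝ)^2/6)*emR D3 3 M|)
          + |(1/2)*emR E2 1 M|) + |((M:ℝ)/2)*emR E2 2 M|) + |emR F1 1 M|) + |(1/(M:ℝ))*emS h3 M| :=
          add_le_add_left (add_le_add_left (add_le_add_left (add_le_add_left (abs_add_le _ _) _) _) _) _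
      _ ≤ (((((|(1/12)*emR D3 1 M| + |((M:ℝ)/4)*emR D3 2 M|) + |((M:ℝ)^2/6)*emR D3 3 M|)
          + |(1/2)*emR E2 1 M|) + |((M:ℝ)/2)*emR E2 2 M|) + |emR F1 1 M|) + |(1/(M:ℝ))*emS h3 M| :=
          add_le_add_left (add_le_add_left (add_le_add_left (add_le_add_left (add_le_add_left (abs_sub _ _) _) _) _) _) _
      _ ≤ 7*K/(M:ℝ) := by
          have : 7*K/(M:ℝ) = K/(M:ℝ) + K/(M:ℝ) + K/(M:ℝ) + K/(M:ℝ) + K/(M:ℝ) + K/(M:ℝ) + K/(M:ℝ) := by ring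
          rw [this]
          gcongr
  have hTrho : Tendsto (fun M : ℕ => (M:ℝ)^2 * emS h M + (M:ℝ) * emS h1 M + emS h2 M
      + (1/(M:ℝ)) * emS h3 M) atTop (nhds 0) := by
    apply squeeze_zero_norm' ?_ (tendsto_const_div_atTop_nhds_zero_nat (7*K))
    filter_upwards [eventually_ge_atTop 1] with M hM
    rw [Real.norm_eq_abs]
    exact bound M hM
  have hP1 : Tendsto (fun M : ℕ => (M:ℝ)^3 * ∑ i ∈ Finset.Icc 1 M,
      ((1/(M:ℝ)) * (w M ((i:ℝ)/(M:ℝ)) - (((i:ℝ)/(M:ℝ)) * h ((i:ℝ)/(M:ℝ))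
        + ((i:ℝ)/(M:ℝ)) * h1 ((i:ℝ)/(M:ℝ)) / (M:ℝ)
        + ((i:ℝ)/(M:ℝ)) * h2 ((i:ℝ)/(M:ℝ)) / (M:ℝ)^2
        + ((i:ℝ)/(M:ℝ)) * h3 ((i:ℝ)/(M:ℝ)) / (M:ℝ)^3))) / (i:ℝ)) atTop (nhds 0) := by
    apply squeeze_zero_norm' ?_ he
    filter_upwards [eventually_ge_atTop 1] with M hM
    have hmpos : (0:ℝ) < M := by exact_mod_cast hM
    have heM : 0 ≤ e M := le_trans (abs_nonneg _) (hw M hM 0 ⟨le_refl 0, zero_le_one⟩)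
    rw [Real.norm_eq_abs, abs_mul, abs_pow, abs_of_nonneg (le_of_lt hmpos)]
    have perterm : ∀ i ∈ Finset.Icc 1 M,
        |((1/(M:ℝ)) * (w M ((i:ℝ)/(M:ℝ)) - (((i:ℝ)/(M:ℝ)) * h ((i:ℝ)/(M:ℝ))
          + ((i:ℝ)/(M:ℝ)) * h1 ((i:ℝ)/(M:ℝ)) / (M:ℝ)
          + ((i:ℝ)/(M:ℝ)) * h2 ((i:ℝ)/(M:ℝ)) / (M:ℝ)^2
          + ((i:ℝ)/(M:ℝ)) * h3 ((i:ℝ)/(M:ℝ)) / (M:ℝ)^3))) / (i:ℝ)|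
          ≤ (1/(M:ℝ)) * e M := by
      intro i hi
      obtain ⟨hi1, hi2⟩ := Finset.mem_Icc.mp hi
      have hi1' : (1:ℝ) ≤ (i:ℝ) := by exact_mod_cast hi1
      have hx : (i:ℝ)/(M:ℝ) ∈ Set.Icc (0:ℝ) 1 :=
        ⟨by positivity, by rw [div_le_one hmpos]; exact_mod_cast hi2⟩
      have hdel := hw M hM ((i:ℝ)/(M:ℝ)) hx
      calc |((1/(M:ℝ)) * (w M ((i:ℝ)/(M:ℝ)) - (((i:ℝ)/(M:ℝ)) * h ((i:ℝ)/(M:ℝ))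
          + ((i:ℝ)/(M:ℝ)) * h1 ((i:ℝ)/(M:ℝ)) / (M:ℝ)
          + ((i:ℝ)/(M:ℝ)) * h2 ((i:ℝ)/(M:ℝ)) / (M:ℝ)^2
          + ((i:ℝ)/(M:ℝ)) * h3 ((i:ℝ)/(M:ℝ)) / (M:ℝ)^3))) / (i:ℝ)|
          = ((1/(M:ℝ)) * |w M ((i:ℝ)/(M:ℝ)) - (((i:ℝ)/(M:ℝ)) * h ((i:ℝ)/(M:ℝ))
            + ((i:ℝ)/(M:ℝ)) * h1 ((i:ℝ)/(M:ℝ)) / (M:ℝ)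
            + ((i:ℝ)/(M:ℝ)) * h2 ((i:ℝ)/(M:ℝ)) / (M:ℝ)^2
            + ((i:ℝ)/(M:ℝ)) * h3 ((i:ℝ)/(M:ℝ)) / (M:ℝ)^3)|) / (i:ℝ) := by
            rw [abs_div, abs_mul, abs_of_nonneg (by positivity : (0:ℝ) ≤ 1/(M:ℝ)),
              abs_of_nonneg (by positivity : (0:ℝ) ≤ (i:ℝ))]
        _ ≤ (1/(M:ℝ)) * |w M ((i:ℝ)/(M:ℝ)) - (((i:ℝ)/(M:ℝ)) * h ((i:ℝ)/(M:ℝ))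
            + ((i:ℝ)/(M:ℝ)) * h1 ((i:ℝ)/(M:ℝ)) / (M:ℝ)
            + ((i:ℝ)/(M:ℝ)) * h2 ((i:ℝ)/(M:ℝ)) / (M:ℝ)^2
            + ((i:ℝ)/(M:ℝ)) * h3 ((i:ℝ)/(M:ℝ)) / (M:ℝ)^3)| :=
            div_le_self (by positivity) hi1'
        _ ≤ (1/(M:ℝ)) * e M := mul_le_mul_of_nonneg_left hdel (by positivity)
    have inner : |∑ i ∈ Finset.Icc 1 M,
        ((1/(M:ℝ)) * (w M ((i:ℝ)/(M:ℝ)) - (((i:ℝ)/(M:ℝ)) * h ((i:ℝ)/(M:ℝ))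
          + ((i:ℝ)/(M:ℝ)) * h1 ((i:ℝ)/(M:ℝ)) / (M:ℝ)
          + ((i:ℝ)/(M:ℝ)) * h2 ((i:ℝ)/(M:ℝ)) / (M:ℝ)^2
          + ((i:ℝ)/(M:ℝ)) * h3 ((i:ℝ)/(M:ℝ)) / (M:ℝ)^3))) / (i:ℝ)|
          ≤ (M:ℝ) * ((1/(M:ℝ)) * e M) := by
      calc |∑ i ∈ Finset.Icc 1 M, _| ≤ ∑ i ∈ Finset.Icc 1 M,
          |((1/(M:ℝ)) * (w M ((i:ℝ)/(M:ℝ)) - (((i:ℝ)/(M:ℝ)) * h ((i:ℝ)/(M:ℝ))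
            + ((i:ℝ)/(M:ℝ)) * h1 ((i:ℝ)/(M:ℝ)) / (M:ℝ)
            + ((i:ℝ)/(M:ℝ)) * h2 ((i:ℝ)/(M:ℝ)) / (M:ℝ)^2
            + ((i:ℝ)/(M:ℝ)) * h3 ((i:ℝ)/(M:ℝ)) / (M:ℝ)^3))) / (i:ℝ)| :=
            Finset.abs_sum_le_sum_abs _ _
        _ ≤ ∑ _i ∈ Finset.Icc 1 M, (1/(M:ℝ)) * e M := Finset.sum_le_sum perterm
        _ = (M:ℝ) * ((1/(M:ℝ)) * e M) := by
            rw [Finset.sum_const, Nat.card_Icc, nsmul_eq_mul]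
            simp
    calc (M:ℝ)^3 * |∑ i ∈ Finset.Icc 1 M, _| ≤ (M:ℝ)^3 * ((M:ℝ) * ((1/(M:ℝ)) * e M)) :=
          mul_le_mul_of_nonneg_left inner (by positivity)
      _ = (M:ℝ)^3 * e M := by field_simp
  have hsum := hP1.add hTrho
  rw [add_zero] at hsum
  apply hsum.congr'
  filter_upwards [eventually_ge_atTop 1] with M hM
  have hmpos : (0:ℝ) < M := by exact_mod_cast hM
  have hm0 : (M:ℝ) ≠ 0 := ne_of_gt hmpos
  have key : ∀ i ∈ Finset.Icc 1 M,
      (M:ℝ)^3 * (((1/(M:ℝ)) * (((i:ℝ)/(M:ℝ)) * h ((i:ℝ)/(M:ℝ))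
        + ((i:ℝ)/(M:ℝ)) * h1 ((i:ℝ)/(M:ℝ)) / (M:ℝ)
        + ((i:ℝ)/(M:ℝ)) * h2 ((i:ℝ)/(M:ℝ)) / (M:ℝ)^2
        + ((i:ℝ)/(M:ℝ)) * h3 ((i:ℝ)/(M:ℝ)) / (M:ℝ)^3)) / (i:ℝ))
        = (M:ℝ)^2 * (h ((i:ℝ)/(M:ℝ)) / (M:ℝ)) + (M:ℝ) * (h1 ((i:ℝ)/(M:ℝ)) / (M:ℝ))
          + (h2 ((i:ℝ)/(M:ℝ)) / (M:ℝ)) + (1/(M:ℝ)) * (h3 ((i:ℝ)/(M:ℝ)) / (M:ℝ)) := by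
    intro i hi
    obtain ⟨hi1, _⟩ := Finset.mem_Icc.mp hi
    have hi0 : (i:ℝ) ≠ 0 := by
      have : (0:ℝ) < i := by exact_mod_cast hi1
      exact ne_of_gt this
    exact em_arith (M:ℝ) (i:ℝ) _ _ _ _ hm0 hi0
  have hB : (M:ℝ)^3 * ∑ i ∈ Finset.Icc 1 M, ((1/(M:ℝ)) * (((i:ℝ)/(M:ℝ)) * h ((i:ℝ)/(M:ℝ))
        + ((i:ℝ)/(M:ℝ)) * h1 ((i:ℝ)/(M:ℝ)) / (M:ℝ)
        + ((i:ℝ)/(M:ℝ)) * h2 ((i:ℝ)/(M:ℝ)) / (M:ℝ)^2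
        + ((i:ℝ)/(M:ℝ)) * h3 ((i:ℝ)/(M:ℝ)) / (M:ℝ)^3)) / (i:ℝ)
      = (M:ℝ)^2 * emS h M + (M:ℝ) * emS h1 M + emS h2 M + (1/(M:ℝ)) * emS h3 M := by
    rw [Finset.mul_sum, Finset.sum_congr rfl key, Finset.sum_add_distrib,
      Finset.sum_add_distrib, Finset.sum_add_distrib, ← Finset.mul_sum, ← Finset.mul_sum,
      ← Finset.mul_sum, emS_Icc, emS_Icc, emS_Icc, emS_Icc]
  show (M:ℝ)^3 * ∑ i ∈ Finset.Icc 1 M,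
      ((1/(M:ℝ)) * (w M ((i:ℝ)/(M:ℝ)) - (((i:ℝ)/(M:ℝ)) * h ((i:ℝ)/(M:ℝ))
        + ((i:ℝ)/(M:ℝ)) * h1 ((i:ℝ)/(M:ℝ)) / (M:ℝ)
        + ((i:ℝ)/(M:ℝ)) * h2 ((i:ℝ)/(M:ℝ)) / (M:ℝ)^2
        + ((i:ℝ)/(M:ℝ)) * h3 ((i:ℝ)/(M:ℝ)) / (M:ℝ)^3))) / (i:ℝ)
      + ((M:ℝ)^2 * emS h M + (M:ℝ) * emS h1 M + emS h2 M + (1/(M:ℝ)) * emS h3 M)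
      = (M:ℝ)^3 * ∑ i ∈ Finset.Icc 1 M, ((1/(M:ℝ)) * w M ((i:ℝ)/(M:ℝ))) / (i:ℝ)
  rw [← hB, ← mul_add, ← Finset.sum_add_distrib]
  congr 1
  apply Finset.sum_congr rfl
  intro i hi
  ring
end
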